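/- arXiv:1411.1092 — 3 statements merged into one kernel-verified Lean document; each statement's English description precedes it below -/
import Mathlib

section
/- Let $X$, $Y$ be compact metric spaces, $A: X\times Y\to\mathbb{R}$ Lipschitz satisfying $|A(x,y)-A(x',y)-A(x,y')+A(x',y')| \le C\, d_X(x,x')\, d_Y(y,y')$ for some $C>0$. Define $\psi_\nu(x) = \int_Y A(x,y)\,d\nu(y)$ for a probability measure $\nu$ on $Y$. Then the map $\nu \mapsto \psi_\nu$ from probability measures on $Y$ (with the Wasserstein-1 metric) to the Banach space of Lipschitz functions on $X$ (with norm $\|\psi\| = \|\psi\|_0 + \mathrm{Lip}(\psi)$) is Lipschitz with constant at most $C + \mathrm{Lip}(A)$: $\|\psi_\nu - \psi_{\nu'}\| \le (C + \mathrm{Lip}(A))\, W^1(\nu,\nu')$. -/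
open MeasureTheory

/-- The Wasserstein-1 distance, via Kantorovich-Rubinstein duality. -/
noncomputable def W1 {X : Type*} [MeasurableSpace X] [PseudoMetricSpace X]
    (μ₁ μ₂ : Measure X) : ℝ :=
  ⨆ φ : {f : X → ℝ // LipschitzWith 1 f}, (∫ x, φ.1 x ∂μ₁ - ∫ x, φ.1 x ∂μ₂)

/-- The Lipschitz seminorm of a map between metric spaces. -/
noncomputable def lipConst {X Y : Type*} [PseudoMetricSpace X] [PseudoMetricSpace Y]
    (f : X → Y) : NNReal :=
  sInf {K : NNReal | LipschitzWith K f}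

/-- The norm `‖ψ‖ = ‖ψ‖₀ + Lip(ψ)` on the space of Lipschitz functions. -/
noncomputable def lipNorm {X : Type*} [PseudoMetricSpace X] (f : X → ℝ) : ℝ :=
  (⨆ x, |f x|) + (lipConst f : ℝ)

/-!
Both parts of the norm come from the duality bound `∫ f dν - ∫ f dν' ≤ Lip(f) · W¹(ν, ν')`.
For fixed `x` the slice `y ↦ A (x, y)` is `Lip(A)`-Lipschitz, which bounds `‖ψ_ν - ψ_ν'‖₀`;
for fixed `x, x'` the mixed-difference condition says exactly that `y ↦ A (x, y) - A (x', y)`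
is `C · d(x, x')`-Lipschitz, which bounds `Lip(ψ_ν - ψ_ν')` by `C · W¹(ν, ν')`.
-/

open scoped NNReal

section LipConst

variable {α β : Type*} [PseudoMetricSpace α] [PseudoMetricSpace β]

lemma isClosed_setOf_lipschitzWith_constant (f : α → β) :
    IsClosed {K : ℝ≥0 | LipschitzWith K f} := by
  simp only [lipschitzWith_iff_dist_le_mul, Set.ofPred_forall]
  exact isClosed_iInter fun x => isClosed_iInter fun y =>
    isClosed_le continuous_const (by fun_prop)

lemma lipschitzWith_lipConst {f : α → β} (h : ∃ K, LipschitzWith K f) :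
    LipschitzWith (lipConst f) f :=
  (isClosed_setOf_lipschitzWith_constant f).csInf_mem h (OrderBot.bddBelow _)

lemma lipConst_le_of_dist_le_mul {f : α → β} {K : ℝ} (hK : 0 ≤ K)
    (h : ∀ x y, dist (f x) (f y) ≤ K * dist x y) : (lipConst f : ℝ) ≤ K := by
  have : lipConst f ≤ K.toNNReal := csInf_le (OrderBot.bddBelow _) (LipschitzWith.of_dist_le' h)
  simpa [hK] using NNReal.coe_le_coe.2 this

end LipConst

lemma Continuous.integrable_of_compactSpace {Y : Type*} [TopologicalSpace Y] [CompactSpace Y]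
    [MeasurableSpace Y] [OpensMeasurableSpace Y] {f : Y → ℝ} (hf : Continuous f)
    (μ : Measure Y) [IsFiniteMeasure μ] : Integrable f μ :=
  hf.integrable_of_hasCompactSupport (HasCompactSupport.of_compactSpace f)

section W1

variable {Y : Type*} [PseudoMetricSpace Y] [CompactSpace Y] [MeasurableSpace Y] [BorelSpace Y]
  {ν ν' : Measure Y} [IsProbabilityMeasure ν] [IsProbabilityMeasure ν']

lemma abs_integral_sub_le_diam {φ : Y → ℝ} (hφ : LipschitzWith 1 φ) (y₀ : Y)
    (μ : Measure Y) [IsProbabilityMeasure μ] :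
    |∫ y, φ y ∂μ - φ y₀| ≤ Metric.diam (Set.univ : Set Y) := by
  have hbound : ∀ y, ‖φ y - φ y₀‖ ≤ Metric.diam (Set.univ : Set Y) := fun y =>
    calc ‖φ y - φ y₀‖ ≤ dist y y₀ := by
          simpa [← Real.dist_eq] using hφ.dist_le_mul y y₀
      _ ≤ _ := Metric.dist_le_diam_of_mem isCompact_univ.isBounded trivial trivial
  have hint := hφ.continuous.integrable_of_compactSpace μ
  simpa [integral_sub hint (integrable_const _)] using
    norm_integral_le_of_norm_le_const (μ := μ) (Filter.Eventually.of_forall hbound)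

lemma bddAbove_range_integral_sub_integral :
    BddAbove (Set.range fun φ : {f : Y → ℝ // LipschitzWith 1 f} =>
      ∫ y, φ.1 y ∂ν - ∫ y, φ.1 y ∂ν') := by
  obtain ⟨y₀⟩ := nonempty_of_isProbabilityMeasure ν
  refine ⟨2 * Metric.diam (Set.univ : Set Y), ?_⟩
  rintro _ ⟨⟨φ, hφ⟩, rfl⟩
  have h := abs_integral_sub_le_diam hφ y₀ ν
  have h' := abs_integral_sub_le_diam hφ y₀ ν'
  rw [abs_le] at h h'
  dsimp only
  linarith [h.2, h'.1]

lemma integral_sub_integral_le_W1 {φ : Y → ℝ} (hφ : LipschitzWith 1 φ) :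
    ∫ y, φ y ∂ν - ∫ y, φ y ∂ν' ≤ W1 ν ν' :=
  le_ciSup bddAbove_range_integral_sub_integral
    (⟨φ, hφ⟩ : {f : Y → ℝ // LipschitzWith 1 f})

lemma W1_nonneg : 0 ≤ W1 ν ν' := by
  simpa using integral_sub_integral_le_W1 (ν := ν) (ν' := ν')
    ((LipschitzWith.const (0 : ℝ)).weaken zero_le_one)

lemma integral_sub_integral_le_mul_W1 {f : Y → ℝ} {K : ℝ≥0} (hf : LipschitzWith K f) :
    ∫ y, f y ∂ν - ∫ y, f y ∂ν' ≤ K * W1 ν ν' := by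
  rcases eq_or_ne K 0 with rfl | hK
  · obtain ⟨y₀⟩ := nonempty_of_isProbabilityMeasure ν
    have hconst : f = fun _ => f y₀ := funext fun y => (LipschitzWith.zero_iff f).1 hf y y₀
    rw [hconst]
    simp
  · have hscaled : LipschitzWith 1 fun y => (K : ℝ)⁻¹ * f y := by
      simpa [hK, Function.comp_def] using (lipschitzWith_smul (K : ℝ)⁻¹).comp hf
    calc ∫ y, f y ∂ν - ∫ y, f y ∂ν'
        = K * (∫ y, (K : ℝ)⁻¹ * f y ∂ν - ∫ y, (K : ℝ)⁻¹ * f y ∂ν') := by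
          simp [integral_const_mul, mul_sub, hK]
      _ ≤ K * W1 ν ν' := mul_le_mul_of_nonneg_left (integral_sub_integral_le_W1 hscaled) K.2

lemma abs_integral_sub_integral_le_mul_W1 {f : Y → ℝ} {K : ℝ≥0} (hf : LipschitzWith K f) :
    |∫ y, f y ∂ν - ∫ y, f y ∂ν'| ≤ K * W1 ν ν' := by
  have hneg := integral_sub_integral_le_mul_W1 (ν := ν) (ν' := ν') hf.neg
  simp only [Pi.neg_apply, integral_neg] at hneg
  exact abs_le.2 ⟨by linarith, integral_sub_integral_le_mul_W1 hf⟩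

end W1

section IntegralParam

variable {X Y : Type*} [PseudoMetricSpace X] [PseudoMetricSpace Y] [CompactSpace Y]
  [MeasurableSpace Y] [BorelSpace Y] {ν ν' : Measure Y} [IsProbabilityMeasure ν]
  [IsProbabilityMeasure ν'] {A : X × Y → ℝ}

lemma abs_integral_param_sub_le {K : ℝ≥0} (hA : LipschitzWith K A) (x : X) :
    |∫ y, A (x, y) ∂ν - ∫ y, A (x, y) ∂ν'| ≤ K * W1 ν ν' :=
  abs_integral_sub_integral_le_mul_W1 <| by
    simpa [Function.comp_def] using hA.comp (LipschitzWith.prodMk_left x)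

lemma dist_integral_param_sub_le (hA : Continuous A) {C : ℝ} (hC : 0 ≤ C)
    (hmix : ∀ x x' : X, ∀ y y' : Y,
      |A (x, y) - A (x', y) - A (x, y') + A (x', y')| ≤ C * dist x x' * dist y y')
    (x x' : X) :
    dist (∫ y, A (x, y) ∂ν - ∫ y, A (x, y) ∂ν')
        (∫ y, A (x', y) ∂ν - ∫ y, A (x', y) ∂ν') ≤ C * W1 ν ν' * dist x x' := by
  have hslice : ∀ x (μ : Measure Y) [IsProbabilityMeasure μ],
      Integrable (fun y => A (x, y)) μ :=
    fun x μ _ => (hA.comp (Continuous.prodMk_right x)).integrable_of_compactSpace μ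
  have hdiff : LipschitzWith (C.toNNReal * nndist x x') fun y => A (x, y) - A (x', y) :=
    LipschitzWith.of_dist_le_mul fun y y' => by
      rw [Real.dist_eq, NNReal.coe_mul, coe_nndist, Real.coe_toNNReal C hC]
      convert hmix x x' y y' using 2
      ring
  have h := abs_integral_sub_integral_le_mul_W1 (ν := ν) (ν' := ν') hdiff
  rw [integral_sub (hslice x ν) (hslice x' ν), integral_sub (hslice x ν') (hslice x' ν')] at h
  rw [Real.dist_eq]
  calc _ = |(∫ y, A (x, y) ∂ν - ∫ y, A (x', y) ∂ν) -
          (∫ y, A (x, y) ∂ν' - ∫ y, A (x', y) ∂ν')| := by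
        congr 1; ring
    _ ≤ _ := h
    _ = C * W1 ν ν' * dist x x' := by
        rw [NNReal.coe_mul, coe_nndist, Real.coe_toNNReal C hC]; ring

end IntegralParam

theorem lipNorm_integral_param_sub_le_general
    {X Y : Type*} [MetricSpace X]
    [MetricSpace Y] [CompactSpace Y] [MeasurableSpace Y] [BorelSpace Y]
    (A : X × Y → ℝ) (hA : ∃ K, LipschitzWith K A) (C : ℝ) (hC : 0 < C)
    (hmix : ∀ x x' : X, ∀ y y' : Y,
      |A (x, y) - A (x', y) - A (x, y') + A (x', y')| ≤ C * dist x x' * dist y y')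
    (ν ν' : Measure Y) [IsProbabilityMeasure ν] [IsProbabilityMeasure ν'] :
    lipNorm (fun x : X => (∫ y, A (x, y) ∂ν) - ∫ y, A (x, y) ∂ν') ≤
      (C + (lipConst A : ℝ)) * W1 ν ν' := by
  have hAL := lipschitzWith_lipConst hA
  have hW : 0 ≤ W1 ν ν' := W1_nonneg
  have hsup : ⨆ x, |∫ y, A (x, y) ∂ν - ∫ y, A (x, y) ∂ν'| ≤ lipConst A * W1 ν ν' :=
    Real.iSup_le (abs_integral_param_sub_le hAL) (by positivity)
  have hlip : (lipConst (fun x : X => (∫ y, A (x, y) ∂ν) - ∫ y, A (x, y) ∂ν') : ℝ) ≤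
      C * W1 ν ν' :=
    lipConst_le_of_dist_le_mul (by positivity)
      (dist_integral_param_sub_le hAL.continuous hC.le hmix)
  rw [lipNorm]
  linarith

/-- If `A` is Lipschitz and satisfies the mixed-difference condition with constant `C`,
then `ν ↦ ψ_ν` is Lipschitz with constant `C + Lip(A)` from (probability measures on `Y`,
`W¹`) to the Banach space of Lipschitz functions on `X` with norm `‖·‖₀ + Lip(·)`. -/
theorem lipNorm_integral_param_sub_le
    {X Y : Type*} [MetricSpace X] [CompactSpace X] [Nonempty X]
    [MetricSpace Y] [CompactSpace Y] [MeasurableSpace Y] [BorelSpace Y]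
    (A : X × Y → ℝ) (hA : ∃ K, LipschitzWith K A) (C : ℝ) (hC : 0 < C)
    (hmix : ∀ x x' : X, ∀ y y' : Y,
      |A (x, y) - A (x', y) - A (x, y') + A (x', y')| ≤ C * dist x x' * dist y y')
    (ν ν' : Measure Y) [IsProbabilityMeasure ν] [IsProbabilityMeasure ν'] :
    lipNorm (fun x : X => (∫ y, A (x, y) ∂ν) - ∫ y, A (x, y) ∂ν') ≤
      (C + (lipConst A : ℝ)) * W1 ν ν' :=
  lipNorm_integral_param_sub_le_general A hA C hC hmix ν ν'
end

section
/- Let $X$, $Y$ be compact metric spaces, $T, S$ continuous self-maps of $X$ and $Y$, and $A_1, A_2: X\times Y \to \mathbb{R}$ Lipschitz. Define $BR_1(\nu) = \mathrm{argmax}_{\mu\in\mathcal{M}_T(X)} \int A_1\, d(\mu\otimes\nu)$ and $BR_2(\mu) = \mathrm{argmax}_{\nu\in\mathcal{M}_S(Y)} \int A_2\, d(\mu\otimes\nu)$, and let $BR(\mu,\nu) = BR_1(\nu)\times BR_2(\mu)$ on $K = \mathcal{M}_T(X)\times\mathcal{M}_S(Y)$. Then the graph of $BR$ is closed: if $(\mu_n,\nu_n)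 \to (\mu,\nu)$, $(\hat\mu_n,\hat\nu_n)\to(\hat\mu,\hat\nu)$ weakly-*, and $(\hat\mu_n,\hat\nu_n) \in BR(\mu_n,\nu_n)$ for all $n$, then $(\hat\mu,\hat\nu)\in BR(\mu,\nu)$. -/
/-!
The payoff `(μ, ν) ↦ ∫ A d(μ ⊗ ν)` is weak-* continuous on pairs of probability measures, because
the product of probability measures depends continuously on its factors and a Lipschitz `A` on the
compact space `X × Y` is bounded and continuous. The best-response inequalities at stage `n`
therefore pass to the limit.
-/

open MeasureTheory Filter Topology TopologicalSpace
open scoped BoundedContinuousFunction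

namespace MeasureTheory.ProbabilityMeasure

variable {X Y : Type*} [TopologicalSpace X] [SecondCountableTopology X]
  [PseudoMetrizableSpace X] [MeasurableSpace X] [OpensMeasurableSpace X]
  [TopologicalSpace Y] [SecondCountableTopology Y]
  [PseudoMetrizableSpace Y] [MeasurableSpace Y] [OpensMeasurableSpace Y]

theorem continuous_integral_prod (f : X × Y →ᵇ ℝ) :
    Continuous fun q : ProbabilityMeasure X × ProbabilityMeasure Y ↦
      ∫ p, f p ∂((q.1 : Measure X).prod (q.2 : Measure Y)) :=
  (continuous_integral_boundedContinuousFunction f).comp continuous_prod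

theorem integral_prod_le_of_tendsto {ι : Type*} {l : Filter ι} [l.NeBot] (f : X × Y →ᵇ ℝ)
    {μs μs' : ι → ProbabilityMeasure X} {νs νs' : ι → ProbabilityMeasure Y}
    {μ μ' : ProbabilityMeasure X} {ν ν' : ProbabilityMeasure Y}
    (hμ : Tendsto μs l (𝓝 μ)) (hμ' : Tendsto μs' l (𝓝 μ'))
    (hν : Tendsto νs l (𝓝 ν)) (hν' : Tendsto νs' l (𝓝 ν'))
    (hle : ∀ i, ∫ p, f p ∂((μs i : Measure X).prod (νs i : Measure Y)) ≤
      ∫ p, f p ∂((μs' i : Measure X).prod (νs' i : Measure Y))) :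
    ∫ p, f p ∂((μ : Measure X).prod (ν : Measure Y)) ≤
      ∫ p, f p ∂((μ' : Measure X).prod (ν' : Measure Y)) :=
  le_of_tendsto_of_tendsto' (((continuous_integral_prod f).tendsto _).comp (hμ.prodMk_nhds hν))
    (((continuous_integral_prod f).tendsto _).comp (hμ'.prodMk_nhds hν')) hle

end MeasureTheory.ProbabilityMeasure

theorem best_response_graph_closed_general
    {X Y : Type*} [MetricSpace X] [CompactSpace X] [MeasurableSpace X] [BorelSpace X]
    [MetricSpace Y] [CompactSpace Y] [MeasurableSpace Y] [BorelSpace Y]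
    (T : X → X) (S : Y → Y)
    (A₁ A₂ : X × Y → ℝ) (hA₁ : ∃ K, LipschitzWith K A₁) (hA₂ : ∃ K, LipschitzWith K A₂)
    (μn hatμn : ℕ → ProbabilityMeasure X) (νn hatνn : ℕ → ProbabilityMeasure Y)
    (μ hatμ : ProbabilityMeasure X) (ν hatν : ProbabilityMeasure Y)
    (hμn : Tendsto μn atTop (nhds μ)) (hνn : Tendsto νn atTop (nhds ν))
    (hhatμn : Tendsto hatμn atTop (nhds hatμ)) (hhatνn : Tendsto hatνn atTop (nhds hatν))
    (hBR1 : ∀ n, ∀ η : Measure X, IsProbabilityMeasure η → η.map T = η →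
      ∫ p, A₁ p ∂(η.prod (νn n : Measure Y)) ≤
        ∫ p, A₁ p ∂((hatμn n : Measure X).prod (νn n : Measure Y)))
    (hBR2 : ∀ n, ∀ η : Measure Y, IsProbabilityMeasure η → η.map S = η →
      ∫ p, A₂ p ∂((μn n : Measure X).prod η) ≤
        ∫ p, A₂ p ∂((μn n : Measure X).prod (hatνn n : Measure Y))) :
    (∀ η : Measure X, IsProbabilityMeasure η → η.map T = η →
      ∫ p, A₁ p ∂(η.prod (ν : Measure Y)) ≤
        ∫ p, A₁ p ∂((hatμ : Measure X).prod (ν : Measure Y))) ∧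
    (∀ η : Measure Y, IsProbabilityMeasure η → η.map S = η →
      ∫ p, A₂ p ∂((μ : Measure X).prod η) ≤
        ∫ p, A₂ p ∂((μ : Measure X).prod (hatν : Measure Y))) := by
  obtain ⟨_, hK₁⟩ := hA₁
  obtain ⟨_, hK₂⟩ := hA₂
  constructor
  · intro η hη hηT
    exact ProbabilityMeasure.integral_prod_le_of_tendsto
      (.mkOfCompact ⟨A₁, hK₁.continuous⟩) (μs := fun _ ↦ ⟨η, hη⟩)
      tendsto_const_nhds hhatμn hνn hνn fun n ↦ hBR1 n η hη hηT
  · intro η hη hηS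
    exact ProbabilityMeasure.integral_prod_le_of_tendsto
      (.mkOfCompact ⟨A₂, hK₂.continuous⟩) (νs := fun _ ↦ ⟨η, hη⟩)
      hμn hμn tendsto_const_nhds hhatνn fun n ↦ hBR2 n η hη hηS

/-- The graph of the best-response map `BR(μ,ν) = BR₁(ν) × BR₂(μ)` is closed: if
`(μₙ,νₙ) → (μ,ν)`, `(μ̂ₙ,ν̂ₙ) → (μ̂,ν̂)` weakly-*, all measures invariant, and
`(μ̂ₙ,ν̂ₙ) ∈ BR(μₙ,νₙ)` for all `n`, then `(μ̂,ν̂) ∈ BR(μ,ν)`. -/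
theorem best_response_graph_closed
    {X Y : Type*} [MetricSpace X] [CompactSpace X] [MeasurableSpace X] [BorelSpace X]
    [MetricSpace Y] [CompactSpace Y] [MeasurableSpace Y] [BorelSpace Y]
    (T : X → X) (hT : Continuous T) (S : Y → Y) (hS : Continuous S)
    (A₁ A₂ : X × Y → ℝ) (hA₁ : ∃ K, LipschitzWith K A₁) (hA₂ : ∃ K, LipschitzWith K A₂)
    (μn hatμn : ℕ → ProbabilityMeasure X) (νn hatνn : ℕ → ProbabilityMeasure Y)
    (μ hatμ : ProbabilityMeasure X) (ν hatν : ProbabilityMeasure Y)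
    (hinv : ∀ n, (μn n : Measure X).map T = (μn n : Measure X) ∧
      (hatμn n : Measure X).map T = (hatμn n : Measure X) ∧
      (νn n : Measure Y).map S = (νn n : Measure Y) ∧
      (hatνn n : Measure Y).map S = (hatνn n : Measure Y))
    (hinvlim : (μ : Measure X).map T = (μ : Measure X) ∧
      (hatμ : Measure X).map T = (hatμ : Measure X) ∧
      (ν : Measure Y).map S = (ν : Measure Y) ∧
      (hatν : Measure Y).map S = (hatν : Measure Y))
    (hμn : Tendsto μn atTop (nhds μ)) (hνn : Tendsto νn atTop (nhds ν))
    (hhatμn : Tendsto hatμn atTop (nhds hatμ)) (hhatνn : Tendsto hatνn atTop (nhds hatν))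
    (hBR1 : ∀ n, ∀ η : Measure X, IsProbabilityMeasure η → η.map T = η →
      ∫ p, A₁ p ∂(η.prod (νn n : Measure Y)) ≤
        ∫ p, A₁ p ∂((hatμn n : Measure X).prod (νn n : Measure Y)))
    (hBR2 : ∀ n, ∀ η : Measure Y, IsProbabilityMeasure η → η.map S = η →
      ∫ p, A₂ p ∂((μn n : Measure X).prod η) ≤
        ∫ p, A₂ p ∂((μn n : Measure X).prod (hatνn n : Measure Y))) :
    (∀ η : Measure X, IsProbabilityMeasure η → η.map T = η →
      ∫ p, A₁ p ∂(η.prod (ν : Measure Y)) ≤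
        ∫ p, A₁ p ∂((hatμ : Measure X).prod (ν : Measure Y))) ∧
    (∀ η : Measure Y, IsProbabilityMeasure η → η.map S = η →
      ∫ p, A₂ p ∂((μ : Measure X).prod η) ≤
        ∫ p, A₂ p ∂((μ : Measure X).prod (hatν : Measure Y))) :=
  best_response_graph_closed_general T S A₁ A₂ hA₁ hA₂ μn hatμn νn hatνn μ hatμ ν hatν hμn hνn
    hhatμn hhatνn hBR1 hBR2
end

section
/- Let $X = Y = \{0,1\}^{\mathbb{N}}$ with shift map $\sigma$, and $\bar 0 = (000\dots)$, $\bar 1 = (111\dots)$. Suppose $A_1, A_2: X\times Y \to \mathbb{R}$ are continuous functions satisfying: $A_1(\bar 0,\bar 0)=2$ and $A_1(x,\bar 0)<2$ for $x\ne\bar 0$; $A_2(\bar 0,\bar 0)=3$ and $A_2(\bar 0,y)<3$ for $y\ne\bar 0$; $A_1(\bar 1,\bar 1)=3$ and $A_1(x,\bar 1)<3$ for $x\ne\bar 1$; $A_2(\bar 1,\bar 1)=2$ and $A_2(\bar 1,y)<2$ for $y\ne\bar 1$. With payoffs $\varphi_i(\mu,\nu)=\int A_i\,d(\mu\otimes\nu)$,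 both $(\delta_{\bar 0},\delta_{\bar 0})$ and $(\delta_{\bar 1},\delta_{\bar 1})$ are Nash equilibria of the ergodic game; in particular, Nash equilibrium need not be unique. -/
/-! `δ_a` is a best response to `δ_b` among all probability measures: the payoff of `μ` against
`δ_b` is the integral over `μ` of the continuous section `x ↦ A (x, b)`, and this section is
pointwise maximal at `a`. -/

open MeasureTheory

/-- The shift map on the Bernoulli space `{0,1}^ℕ`. -/
def shiftMap : (ℕ → Fin 2) → (ℕ → Fin 2) := fun x n => x (n + 1)

lemma forall_le_of_eq_of_forall_ne_lt {α β : Type*} [Preorder β] {f : α → β} {a : α}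
    {c : β} (heq : f a = c) (hlt : ∀ x, x ≠ a → f x < c) : ∀ x, f x ≤ f a := by
  intro x
  rcases eq_or_ne x a with rfl | hx
  · exact le_rfl
  · exact (hlt x hx).le.trans heq.ge

lemma integral_le_of_forall_le_apply {X : Type*} [TopologicalSpace X] [CompactSpace X]
    [MeasurableSpace X] [OpensMeasurableSpace X] {f : X → ℝ} (hf : Continuous f) {a : X}
    (ha : ∀ x, f x ≤ f a) (μ : Measure X) [IsProbabilityMeasure μ] :
    ∫ x, f x ∂μ ≤ f a :=
  calc ∫ x, f x ∂μ ≤ ∫ _, f a ∂μ :=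
        integral_mono (hf.integrable_of_hasCompactSupport (.of_compactSpace f))
          (integrable_const _) ha
    _ = f a := by simp

section ProdDirac

variable {X Y : Type*} [TopologicalSpace X] [MeasurableSpace X] [OpensMeasurableSpace X]
  [TopologicalSpace Y] [MeasurableSpace Y] [OpensMeasurableSpace Y]
  [SecondCountableTopologyEither X Y] {A : X × Y → ℝ}

lemma integral_prod_dirac_right (hA : Continuous A) (μ : Measure X) [SFinite μ] (b : Y) :
    ∫ p, A p ∂(μ.prod (Measure.dirac b)) = ∫ x, A (x, b) ∂μ := by
  rw [Measure.prod_dirac, integral_map (by fun_prop) hA.aestronglyMeasurable]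

lemma integral_dirac_prod_left (hA : Continuous A) (a : X) (ν : Measure Y) [SFinite ν] :
    ∫ p, A p ∂((Measure.dirac a).prod ν) = ∫ y, A (a, y) ∂ν := by
  rw [Measure.dirac_prod, integral_map (by fun_prop) hA.aestronglyMeasurable]

lemma integral_dirac_prod_dirac (hA : Continuous A) (a : X) (b : Y) :
    ∫ p, A p ∂((Measure.dirac a).prod (Measure.dirac b)) = A (a, b) := by
  rw [integral_dirac_prod_left hA,
    integral_dirac' (fun y => A (a, y)) b (hA.comp (by fun_prop)).stronglyMeasurable]

lemma integral_prod_dirac_le_of_forall_le [CompactSpace X] (hA : Continuous A) {a : X} {b : Y}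
    (hmax : ∀ x, A (x, b) ≤ A (a, b)) (μ : Measure X) [IsProbabilityMeasure μ] :
    ∫ p, A p ∂(μ.prod (Measure.dirac b)) ≤
      ∫ p, A p ∂((Measure.dirac a).prod (Measure.dirac b)) := by
  rw [integral_prod_dirac_right hA, integral_dirac_prod_dirac hA]
  exact integral_le_of_forall_le_apply (f := fun x => A (x, b)) (by fun_prop) hmax μ

lemma integral_dirac_prod_le_of_forall_le [CompactSpace Y] (hA : Continuous A) {a : X} {b : Y}
    (hmax : ∀ y, A (a, y) ≤ A (a, b)) (ν : Measure Y) [IsProbabilityMeasure ν] :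
    ∫ p, A p ∂((Measure.dirac a).prod ν) ≤
      ∫ p, A p ∂((Measure.dirac a).prod (Measure.dirac b)) := by
  rw [integral_dirac_prod_left hA, integral_dirac_prod_dirac hA]
  exact integral_le_of_forall_le_apply (f := fun y => A (a, y)) (by fun_prop) hmax ν

end ProdDirac

theorem two_nash_equilibria_general
    (A₁ A₂ : (ℕ → Fin 2) × (ℕ → Fin 2) → ℝ) (hA₁ : Continuous A₁) (hA₂ : Continuous A₂)
    (zero : ℕ → Fin 2)
    (one : ℕ → Fin 2)
    (h1 : A₁ (zero, zero) = 2) (h2 : ∀ x, x ≠ zero → A₁ (x, zero) < 2)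
    (h3 : A₂ (zero, zero) = 3) (h4 : ∀ y, y ≠ zero → A₂ (zero, y) < 3)
    (h5 : A₁ (one, one) = 3) (h6 : ∀ x, x ≠ one → A₁ (x, one) < 3)
    (h7 : A₂ (one, one) = 2) (h8 : ∀ y, y ≠ one → A₂ (one, y) < 2) :
    ((∀ η : Measure (ℕ → Fin 2), IsProbabilityMeasure η → η.map shiftMap = η →
        ∫ p, A₁ p ∂(η.prod (Measure.dirac zero)) ≤
          ∫ p, A₁ p ∂((Measure.dirac zero).prod (Measure.dirac zero))) ∧
     (∀ η : Measure (ℕ → Fin 2), IsProbabilityMeasure η → η.map shiftMap = η →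
        ∫ p, A₂ p ∂((Measure.dirac zero).prod η) ≤
          ∫ p, A₂ p ∂((Measure.dirac zero).prod (Measure.dirac zero)))) ∧
    ((∀ η : Measure (ℕ → Fin 2), IsProbabilityMeasure η → η.map shiftMap = η →
        ∫ p, A₁ p ∂(η.prod (Measure.dirac one)) ≤
          ∫ p, A₁ p ∂((Measure.dirac one).prod (Measure.dirac one))) ∧
     (∀ η : Measure (ℕ → Fin 2), IsProbabilityMeasure η → η.map shiftMap = η →
        ∫ p, A₂ p ∂((Measure.dirac one).prod η) ≤
          ∫ p, A₂ p ∂((Measure.dirac one).prod (Measure.dirac one)))) :=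
  ⟨⟨fun η _ _ => integral_prod_dirac_le_of_forall_le hA₁
      (forall_le_of_eq_of_forall_ne_lt (f := fun x => A₁ (x, zero)) h1 h2) η,
    fun η _ _ => integral_dirac_prod_le_of_forall_le hA₂
      (forall_le_of_eq_of_forall_ne_lt (f := fun y => A₂ (zero, y)) h3 h4) η⟩,
   ⟨fun η _ _ => integral_prod_dirac_le_of_forall_le hA₁
      (forall_le_of_eq_of_forall_ne_lt (f := fun x => A₁ (x, one)) h5 h6) η,
    fun η _ _ => integral_dirac_prod_le_of_forall_le hA₂
      (forall_le_of_eq_of_forall_ne_lt (f := fun y => A₂ (one, y)) h7 h8) η⟩⟩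

/-- Non-uniqueness of Nash equilibrium: under the stated conditions on `A₁, A₂`, both
`(δ_0̄, δ_0̄)` and `(δ_1̄, δ_1̄)` are Nash equilibria of the ergodic game with payoffs
`φᵢ(μ,ν) = ∫ Aᵢ d(μ⊗ν)`. -/
theorem two_nash_equilibria
    (A₁ A₂ : (ℕ → Fin 2) × (ℕ → Fin 2) → ℝ) (hA₁ : Continuous A₁) (hA₂ : Continuous A₂)
    (zero : ℕ → Fin 2) (hzero : zero = fun _ => 0)
    (one : ℕ → Fin 2) (hone : one = fun _ => 1)
    (h1 : A₁ (zero, zero) = 2) (h2 : ∀ x, x ≠ zero → A₁ (x, zero) < 2)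
    (h3 : A₂ (zero, zero) = 3) (h4 : ∀ y, y ≠ zero → A₂ (zero, y) < 3)
    (h5 : A₁ (one, one) = 3) (h6 : ∀ x, x ≠ one → A₁ (x, one) < 3)
    (h7 : A₂ (one, one) = 2) (h8 : ∀ y, y ≠ one → A₂ (one, y) < 2) :
    ((∀ η : Measure (ℕ → Fin 2), IsProbabilityMeasure η → η.map shiftMap = η →
        ∫ p, A₁ p ∂(η.prod (Measure.dirac zero)) ≤
          ∫ p, A₁ p ∂((Measure.dirac zero).prod (Measure.dirac zero))) ∧
     (∀ η : Measure (ℕ → Fin 2), IsProbabilityMeasure η → η.map shiftMap = η →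
        ∫ p, A₂ p ∂((Measure.dirac zero).prod η) ≤
          ∫ p, A₂ p ∂((Measure.dirac zero).prod (Measure.dirac zero)))) ∧
    ((∀ η : Measure (ℕ → Fin 2), IsProbabilityMeasure η → η.map shiftMap = η →
        ∫ p, A₁ p ∂(η.prod (Measure.dirac one)) ≤
          ∫ p, A₁ p ∂((Measure.dirac one).prod (Measure.dirac one))) ∧
     (∀ η : Measure (ℕ → Fin 2), IsProbabilityMeasure η → η.map shiftMap = η →
        ∫ p, A₂ p ∂((Measure.dirac one).prod η) ≤
          ∫ p, A₂ p ∂((Measure.dirac one).prod (Measure.dirac one)))) :=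
  two_nash_equilibria_general A₁ A₂ hA₁ hA₂ zero one h1 h2 h3 h4 h5 h6 h7 h8
end
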